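/- For f : ∂𝔻 → ℝ continuous, the Schwarz operator S(f)(z) = (1/2πi) ∫_{∂𝔻} f(ζ) · (ζ+z)/(ζ−z) · dζ/ζ defines a holomorphic function on the open unit disk 𝔻 whose real part has boundary values f: for each continuity point ζ₀ ∈ ∂𝔻, Re(S(f)(z)) → f(ζ₀) as z → ζ₀ in 𝔻. Moreover Im(S(f)(0)) = 0. -/

import Mathlib

/-- The Schwarz operator on the unit disk, written via the parametrization
ζ = e^{it} of the positively oriented unit circle:
S(f)(z) = (1/2πi) ∫_{∂𝔻} f(ζ) (ζ+z)/(ζ−z) dζ/ζ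
        = (1/2π) ∫₀^{2π} f(e^{it}) (e^{it}+z)/(e^{it}−z) dt. -/
noncomputable def schwarz (f : ℂ → ℝ) (z : ℂ) : ℂ :=
  (1 / (2 * Real.pi) : ℝ) * ∫ t in (0 : ℝ)..(2 * Real.pi),
    (f (Complex.exp (Complex.I * t)) : ℂ) *
      (Complex.exp (Complex.I * t) + z) / (Complex.exp (Complex.I * t) - z)

/-!
Since `(ζ + z) / (ζ - z)` is the Herglotz–Riesz kernel, `schwarz f` is the circle average of that
kernel against `f`, hence holomorphic in `z`, and its real part is the Poisson integral of `f`.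
The Poisson kernel is a nonnegative approximate identity: its average is `1` (Poisson's formula
for the constant `1`), and on the part of the circle at distance `≥ δ` from `ζ₀` it is
`O(|z - ζ₀| / δ²)`; splitting the circle accordingly gives the boundary values. At `z = 0` the
kernel is identically `1`, so `schwarz f 0` is the (real) mean of `f`.
-/

open Complex Metric Real Filter Topology

section PoissonKernel

variable {c w ζ ζ₀ : ℂ} {R : ℝ}

lemma continuousOn_poissonKernel_sphere (hw : w ∈ ball c R) :
    ContinuousOn (poissonKernel c w) (sphere c |R|) := by
  rw [poissonKernel_eq_re_herglotzRieszKernel]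
  exact continuous_re.comp_continuousOn (continuousOn_herglotzRieszKernel_sphere hw)

lemma poissonKernel_nonneg (hw : w ∈ ball c R) (hζ : ζ ∈ sphere c R) :
    0 ≤ poissonKernel c w ζ := by
  rw [mem_ball_iff_norm] at hw
  rw [mem_sphere_iff_norm] at hζ
  rw [poissonKernel_def, hζ]
  exact div_nonneg (sub_nonneg.2 (pow_le_pow_left₀ (norm_nonneg _) hw.le 2)) (sq_nonneg _)

lemma circleAverage_poissonKernel (hw : w ∈ ball c R) :
    circleAverage (poissonKernel c w) c R = 1 := by
  have h := (diffContOnCl_const (c := (1 : ℂ))).circleAverage_poissonKernel_smul hw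
  rw [← ofReal_inj, ofReal_one, ← h, ← ofRealCLM_apply,
    ← ofRealCLM.circleAverage_comp_comm (continuousOn_poissonKernel_sphere hw).circleIntegrable']
  congr 1
  ext
  simp

lemma poissonKernel_le_of_le_dist (hw : w ∈ ball c R) (hζ : ζ ∈ sphere c R)
    (hζ₀ : ζ₀ ∈ sphere c R) {δ : ℝ} (hδ : 0 < δ) (hζζ₀ : δ ≤ dist ζ ζ₀) (hwζ₀ : dist w ζ₀ ≤ δ / 2) :
    poissonKernel c w ζ ≤ 8 * R * dist w ζ₀ / δ ^ 2 := by
  rw [mem_ball] at hw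
  rw [mem_sphere] at hζ hζ₀
  simp only [poissonKernel_def, sub_sub_sub_cancel_right, ← dist_eq_norm, hζ]
  have hR0 : 0 ≤ R := hζ ▸ dist_nonneg
  have hR : R - dist w c ≤ dist w ζ₀ := by
    linarith [dist_triangle ζ₀ w c, dist_comm ζ₀ w]
  have hζw : δ / 2 ≤ dist ζ w := by linarith [dist_triangle ζ w ζ₀]
  calc (R ^ 2 - dist w c ^ 2) / dist ζ w ^ 2
      ≤ 2 * R * dist w ζ₀ / (δ / 2) ^ 2 := by
        refine div_le_div₀ (by positivity) ?_ (by positivity) (by gcongr)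
        nlinarith [dist_nonneg (x := w) (y := c)]
    _ = 8 * R * dist w ζ₀ / δ ^ 2 := by ring

lemma circleAverage_poissonKernel_smul_sub {g : ℂ → ℝ} (hg : CircleIntegrable g c R)
    (hw : w ∈ ball c R) (a : ℝ) :
    circleAverage (poissonKernel c w • g) c R - a =
      circleAverage (fun ζ ↦ poissonKernel c w ζ * (g ζ - a)) c R := by
  have hP : CircleIntegrable (poissonKernel c w) c R :=
    (continuousOn_poissonKernel_sphere hw).circleIntegrable'
  have hPg : CircleIntegrable (poissonKernel c w • g) c R :=
    hg.continuousOn_smul (continuousOn_poissonKernel_sphere hw)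
  conv_lhs => rw [← mul_one a, ← circleAverage_poissonKernel hw, ← smul_eq_mul,
    ← circleAverage_smul, ← circleAverage_sub hPg (hP.const_smul (a := a))]
  congr 1
  ext ζ
  simp only [Pi.sub_apply, Pi.smul_apply, Pi.mul_apply, smul_eq_mul]
  ring

lemma poissonKernel_mul_abs_sub_le {g : ℂ → ℝ} (hw : w ∈ ball c R) (hζ : ζ ∈ sphere c R)
    (hζ₀ : ζ₀ ∈ sphere c R) {ε δ M : ℝ} (hδ : 0 < δ)
    (hg_near : ∀ ζ ∈ sphere c R, dist ζ ζ₀ < δ → |g ζ - g ζ₀| ≤ ε)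
    (hM : ∀ ζ ∈ sphere c R, |g ζ| ≤ M) (hwζ₀ : dist w ζ₀ ≤ δ / 2) :
    poissonKernel c w ζ * |g ζ - g ζ₀| ≤
      ε * poissonKernel c w ζ + 16 * M * R * dist w ζ₀ / δ ^ 2 := by
  have hP := poissonKernel_nonneg hw hζ
  have hε : 0 ≤ ε := by simpa using hg_near ζ₀ hζ₀ (by simpa)
  have hM₀ : 0 ≤ M := (abs_nonneg _).trans (hM ζ hζ)
  have hR₀ : 0 ≤ R := (mem_sphere.1 hζ) ▸ dist_nonneg
  rcases lt_or_ge (dist ζ ζ₀) δ with hnear | hfar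
  · have := hg_near ζ hζ hnear
    nlinarith [show 0 ≤ 16 * M * R * dist w ζ₀ / δ ^ 2 by positivity]
  · have hg₂ : |g ζ - g ζ₀| ≤ 2 * M := by
      linarith [abs_sub (g ζ) (g ζ₀), hM ζ hζ, hM ζ₀ hζ₀]
    calc poissonKernel c w ζ * |g ζ - g ζ₀|
        ≤ 8 * R * dist w ζ₀ / δ ^ 2 * (2 * M) :=
          mul_le_mul (poissonKernel_le_of_le_dist hw hζ hζ₀ hδ hfar hwζ₀) hg₂ (abs_nonneg _)
            (by positivity)
      _ = 16 * M * R * dist w ζ₀ / δ ^ 2 := by ring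
      _ ≤ _ := le_add_of_nonneg_left (by positivity)

lemma abs_circleAverage_poissonKernel_smul_sub_le {g : ℂ → ℝ}
    (hg : ContinuousOn g (sphere c R)) (hw : w ∈ ball c R) (hζ₀ : ζ₀ ∈ sphere c R)
    {ε δ M : ℝ} (hδ : 0 < δ) (hg_near : ∀ ζ ∈ sphere c R, dist ζ ζ₀ < δ → |g ζ - g ζ₀| ≤ ε)
    (hM : ∀ ζ ∈ sphere c R, |g ζ| ≤ M) (hwζ₀ : dist w ζ₀ ≤ δ / 2) :
    |circleAverage (poissonKernel c w • g) c R - g ζ₀| ≤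
      ε + 16 * M * R * dist w ζ₀ / δ ^ 2 := by
  have hR : |R| = R := abs_of_nonneg ((mem_sphere.1 hζ₀) ▸ dist_nonneg)
  have hP := continuousOn_poissonKernel_sphere hw
  rw [← hR] at hg
  set K := 16 * M * R * dist w ζ₀ / δ ^ 2
  rw [circleAverage_poissonKernel_smul_sub hg.circleIntegrable' hw]
  calc |circleAverage (fun ζ ↦ poissonKernel c w ζ * (g ζ - g ζ₀)) c R|
      ≤ circleAverage (fun ζ ↦ |poissonKernel c w ζ * (g ζ - g ζ₀)|) c R :=
        abs_circleAverage_le_circleAverage_abs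
    _ ≤ circleAverage (fun ζ ↦ ε * poissonKernel c w ζ + K) c R := by
        refine circleAverage_mono ?_ ?_ fun ζ hζ ↦ ?_
        · exact ContinuousOn.circleIntegrable' (by fun_prop)
        · exact ContinuousOn.circleIntegrable' (by fun_prop)
        rw [hR] at hζ
        rw [abs_mul, abs_of_nonneg (poissonKernel_nonneg hw hζ)]
        exact poissonKernel_mul_abs_sub_le hw hζ hζ₀ hδ hg_near hM hwζ₀
    _ = ε + K := by
        rw [circleAverage_fun_add (f₁ := fun ζ ↦ ε * poissonKernel c w ζ)
          (hP.circleIntegrable'.const_smul (a := ε)) (circleIntegrable_const K c R),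
          circleAverage_const]
        simp_rw [← smul_eq_mul, circleAverage_fun_smul, circleAverage_poissonKernel hw,
          smul_eq_mul, mul_one]

theorem tendsto_circleAverage_poissonKernel_smul {g : ℂ → ℝ}
    (hg : ContinuousOn g (sphere c R)) (hζ₀ : ζ₀ ∈ sphere c R) :
    Tendsto (fun w ↦ circleAverage (poissonKernel c w • g) c R) (𝓝[ball c R] ζ₀)
      (𝓝 (g ζ₀)) := by
  obtain ⟨M, hM⟩ := (isCompact_sphere c R).exists_bound_of_continuousOn hg
  rw [Metric.tendsto_nhds]
  intro ε hε
  obtain ⟨δ, hδ, hg_near⟩ := Metric.continuousWithinAt_iff.1 (hg ζ₀ hζ₀) (ε / 2) (half_pos hε)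
  have h_small : ∀ᶠ w in 𝓝 ζ₀, ε / 2 + 16 * M * R * dist w ζ₀ / δ ^ 2 < ε :=
    ContinuousAt.eventually_lt (by fun_prop) continuousAt_const (by simpa using half_lt_self hε)
  have h_near : ∀ᶠ w in 𝓝 ζ₀, dist w ζ₀ ≤ δ / 2 := closedBall_mem_nhds ζ₀ (half_pos hδ)
  filter_upwards [self_mem_nhdsWithin, nhdsWithin_le_nhds h_small, nhdsWithin_le_nhds h_near]
    with w hw hw_small hw_near
  rw [Real.dist_eq]
  refine (abs_circleAverage_poissonKernel_smul_sub_le hg hw hζ₀ hδ (fun ζ hζ hζζ₀ ↦ ?_)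
    (fun ζ hζ ↦ ?_) hw_near).trans_lt hw_small
  · exact (Real.dist_eq _ _ ▸ hg_near hζ hζζ₀).le
  · exact Real.norm_eq_abs _ ▸ hM ζ hζ

end PoissonKernel

theorem schwarz_eq_circleAverage (f : ℂ → ℝ) (z : ℂ) :
    schwarz f z = circleAverage (fun ζ ↦ herglotzRieszKernel 0 z ζ • (f ζ : ℂ)) 0 1 := by
  rw [schwarz, circleAverage_def, Complex.real_smul, one_div]
  congr 1
  refine intervalIntegral.integral_congr fun t _ ↦ ?_
  simp only [herglotzRieszKernel_def, circleMap_zero, ofReal_one, one_mul, sub_zero, smul_eq_mul,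
    mul_comm I]
  ring

theorem differentiableOn_schwarz {f : ℂ → ℝ} (hf : ContinuousOn f (sphere 0 1)) :
    DifferentiableOn ℂ (schwarz f) (ball 0 1) := by
  have hf' : CircleIntegrable (fun ζ ↦ (f ζ : ℂ)) 0 1 :=
    (continuous_ofReal.comp_continuousOn hf).circleIntegrable zero_le_one
  exact (differentiableOn_circleAverage_herglotzRieszKernel_smul hf').congr
    fun z _ ↦ schwarz_eq_circleAverage f z

theorem re_schwarz {f : ℂ → ℝ} (hf : CircleIntegrable f 0 1) {z : ℂ} (hz : z ∈ ball 0 1) :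
    (schwarz f z).re = circleAverage (poissonKernel 0 z • f) 0 1 := by
  rw [schwarz_eq_circleAverage, re_circleAverage_herglotzRieszKernel_smul hf hz,
    poissonKernel_eq_re_herglotzRieszKernel]

theorem tendsto_re_schwarz {f : ℂ → ℝ} (hf : ContinuousOn f (sphere 0 1)) {ζ₀ : ℂ}
    (hζ₀ : ζ₀ ∈ sphere 0 1) :
    Tendsto (fun z ↦ (schwarz f z).re) (𝓝[ball 0 1] ζ₀) (𝓝 (f ζ₀)) :=
  (tendsto_circleAverage_poissonKernel_smul hf hζ₀).congr'
    (eventuallyEq_nhdsWithin_of_eqOn fun _ hz ↦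
      (re_schwarz (hf.circleIntegrable zero_le_one) hz).symm)

theorem im_schwarz_zero (f : ℂ → ℝ) : (schwarz f 0).im = 0 := by
  have h_kernel (θ : ℝ) : herglotzRieszKernel 0 0 (circleMap 0 1 θ) = 1 := by
    simp [herglotzRieszKernel_def, circleMap_ne_center one_ne_zero]
  simp [schwarz_eq_circleAverage, circleAverage_def, h_kernel, intervalIntegral.integral_ofReal]

/-- for continuous f : ∂𝔻 → ℝ, S(f) is holomorphic on 𝔻, its real
part has boundary values f at every point of ∂𝔻, and Im(S(f)(0)) = 0. -/
theorem stmt12 (f : ℂ → ℝ) (hf : ContinuousOn f (Metric.sphere 0 1)) :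
    DifferentiableOn ℂ (schwarz f) (Metric.ball 0 1) ∧
    (∀ ζ₀ : ℂ, ‖ζ₀‖ = 1 →
      Filter.Tendsto (fun z => (schwarz f z).re)
        (nhdsWithin ζ₀ (Metric.ball 0 1)) (nhds (f ζ₀))) ∧
    (schwarz f 0).im = 0 :=
  ⟨differentiableOn_schwarz hf,
    fun _ hζ₀ ↦ tendsto_re_schwarz hf (mem_sphere_zero_iff_norm.2 hζ₀), im_schwarz_zero f⟩
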